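/- arXiv:1012.4715 — 5 statements merged into one kernel-verified Lean document; each statement's English description precedes it below -/
import Mathlib

section
/- Let A1 and A2 be complex matrices of proper dimensions m1×n and m2×n, and suppose they admit a joint unitary triangularization A1 = U1 T1 V*, A2 = U2 T2 V* in which the diagonal entries of T1 and T2 are positive reals. Then the GSV vector μ(A1,A2) multiplicatively majorizes the diagonal-ratios vector r defined by r_j = (T1)_{jj} / (T2)_{jj} for j = 1, …, n. -/
open Matrix BigOperators Finset
open scoped ComplexOrder

namespace NetMod

/-- A square complex matrix is unitary. -/
def IsUnitary {k : ℕ} (U : Matrix (Fin k) (Fin k) ℂ) : Prop := Uᴴ * U = 1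

/-- A generalized upper-triangular matrix: entry (i,j) vanishes whenever i > j. -/
def GenUpperTri {m n : ℕ} (T : Matrix (Fin m) (Fin n) ℂ) : Prop :=
  ∀ (i : Fin m) (j : Fin n), (j : ℕ) < (i : ℕ) → T i j = 0

/-- The diagonal entries of a (tall) matrix are positive reals. -/
def PosRealDiag {m n : ℕ} (h : n ≤ m) (T : Matrix (Fin m) (Fin n) ℂ) : Prop :=
  ∀ j : Fin n, 0 < (T (Fin.castLE h j) j).re ∧ (T (Fin.castLE h j) j).im = 0

/-- Joint unitary triangularization of the pair (A1, A2). -/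
def JointTriang {m1 m2 n : ℕ}
    (A1 : Matrix (Fin m1) (Fin n) ℂ) (A2 : Matrix (Fin m2) (Fin n) ℂ)
    (U1 : Matrix (Fin m1) (Fin m1) ℂ) (U2 : Matrix (Fin m2) (Fin m2) ℂ)
    (V : Matrix (Fin n) (Fin n) ℂ)
    (T1 : Matrix (Fin m1) (Fin n) ℂ) (T2 : Matrix (Fin m2) (Fin n) ℂ) : Prop :=
  IsUnitary U1 ∧ IsUnitary U2 ∧ IsUnitary V ∧
  GenUpperTri T1 ∧ GenUpperTri T2 ∧
  A1 = U1 * T1 * Vᴴ ∧ A2 = U2 * T2 * Vᴴ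

/-- `μ` is the generalized-singular-value vector of the pair (A1, A2): it is
nonincreasing, positive, and its squared entries are exactly the solutions, with
algebraic multiplicity, of `det(A1ᴴA1 − x · A2ᴴA2) = 0` (expressed by the
polynomial identity `det(A1ᴴA1 − x A2ᴴA2) = det(A2ᴴA2) ∏ⱼ (μⱼ² − x)`). -/
def IsGSV {m1 m2 n : ℕ}
    (A1 : Matrix (Fin m1) (Fin n) ℂ) (A2 : Matrix (Fin m2) (Fin n) ℂ)
    (μ : Fin n → ℝ) : Prop :=
  Antitone μ ∧ (∀ j, 0 < μ j) ∧
  ∀ x : ℂ, (A1ᴴ * A1 - x • (A2ᴴ * A2)).det = (A2ᴴ * A2).det * ∏ j, ((μ j : ℂ) ^ 2 - x)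

/-- The vector `x` sorted in nonincreasing order. -/
noncomputable def sortDesc {n : ℕ} (x : Fin n → ℝ) : Fin n → ℝ :=
  fun i => x (Tuple.sort x i.rev)

/-- Product of the first `k` entries of `x`. -/
def PProd {n : ℕ} (x : Fin n → ℝ) (k : ℕ) : ℝ :=
  ∏ j ∈ Finset.univ.filter (fun j : Fin n => (j : ℕ) < k), x j

/-- Multiplicative majorization: equal total products, and every partial product of
the nonincreasingly sorted `x` dominates that of the sorted `y`. -/
def MulMaj {n : ℕ} (x y : Fin n → ℝ) : Prop :=
  (∏ j, x j = ∏ j, y j) ∧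
  ∀ k : ℕ, 1 ≤ k → k < n → PProd (sortDesc y) k ≤ PProd (sortDesc x) k

/-- Stacking `F` on top of the `n × n` identity matrix. -/
def augment {m n : ℕ} (F : Matrix (Fin m) (Fin n) ℂ) : Matrix (Fin (m + n)) (Fin n) ℂ :=
  Matrix.of fun i j => if h : (i : ℕ) < m then F ⟨i, h⟩ j
    else if (i : ℕ) = m + (j : ℕ) then 1 else 0

/-- The top `n × n` square part of a tall matrix. -/
def squarePart {m n : ℕ} (h : n ≤ m) (T : Matrix (Fin m) (Fin n) ℂ) :
    Matrix (Fin n) (Fin n) ℂ :=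
  T.submatrix (Fin.castLE h) id

/-- A 2-vector is mixed if one entry is at least 1 and the other at most 1. -/
def Mixed (μ : Fin 2 → ℝ) : Prop := (μ 0 ≤ 1 ∧ 1 ≤ μ 1) ∨ (μ 1 ≤ 1 ∧ 1 ≤ μ 0)

end NetMod

/-!
Let `R₁, R₂` be the square parts of `T₁, T₂` and `G = R₁ R₂⁻¹`, an upper triangular matrix with
diagonal `r`. With `B = R₂ Vᴴ` one has `A₁ᴴA₁ - x A₂ᴴA₂ = Bᴴ (GᴴG - x) B`, so the `μⱼ²` are the
eigenvalues of `GᴴG`, and the claim is Weyl's majorant theorem for the triangular matrix `G`.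
The full products agree because `det (GᴴG) = |det G|²`. For a set `S` of `k` indices, the
principal submatrix `G_SS` is triangular, so `|det G_SS|² = ∏_{j ∈ S} rⱼ²`, and by Cauchy–Binet
this is at most `det (GᴴG)_SS`.
Diagonalising `GᴴG = W D Wᴴ`, Cauchy–Binet exhibits `det (GᴴG)_SS` as a convex combination of
products of `k` eigenvalues, so it is at most the product `μ₁² ⋯ μₖ²` of the `k` largest ones.
-/

theorem exists_perm_eq_comp_of_map_univ_eq {α : Type*} [LinearOrder α] {n : ℕ} {e w : Fin n → α}
    (h : Multiset.map e univ.val = Multiset.map w univ.val) :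
    ∃ σ : Equiv.Perm (Fin n), e = w ∘ σ := by
  have hperm : (List.ofFn (e ∘ Tuple.sort e)).Perm (List.ofFn (w ∘ Tuple.sort w)) :=
    ((Tuple.sort e).ofFn_comp_perm e).trans <|
      (Multiset.coe_eq_coe.mp (by rw [← Fin.univ_val_map, ← Fin.univ_val_map, h])).trans
        ((Tuple.sort w).ofFn_comp_perm w).symm
  have hsorted : e ∘ Tuple.sort e = w ∘ Tuple.sort w := List.ofFn_injective <|
    hperm.eq_of_sortedLE (List.sortedLE_ofFn_iff.mpr (Tuple.monotone_sort e))
      (List.sortedLE_ofFn_iff.mpr (Tuple.monotone_sort w))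
  refine ⟨(Tuple.sort e).symm.trans (Tuple.sort w), funext fun i => ?_⟩
  simpa using congrFun hsorted ((Tuple.sort e).symm i)

namespace Matrix

section CauchyBinet

variable {R : Type*} [CommRing R]

theorem det_mul_eq_sum_prod_mul_det_submatrix {m n : Type*} [Fintype m] [DecidableEq m]
    [Fintype n] (A : Matrix m n R) (B : Matrix n m R) :
    det (A * B) = ∑ p : m → n, (∏ i, A i (p i)) * det (B.submatrix p id) := by
  have hrows : A * B = Matrix.of fun i => ∑ j, A i j • B j := by
    ext i j
    simp [mul_apply]
  rw [hrows]
  change (detRowAlternating (R := R) (n := m)).toMultilinearMap (fun i => ∑ j, A i j • B j) = _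
  rw [MultilinearMap.map_sum]
  refine sum_congr rfl fun p _ => ?_
  rw [MultilinearMap.map_smul_univ]
  rfl

variable {k n : ℕ}

/-- **Cauchy–Binet formula** -/
theorem det_mul_eq_sum_strictMono (A : Matrix (Fin k) (Fin n) R) (B : Matrix (Fin n) (Fin k) R) :
    det (A * B) = ∑ g ∈ univ.filter (StrictMono : (Fin k → Fin n) → Prop),
      det (A.submatrix id g) * det (B.submatrix g id) := by
  have hinjective : ∀ p : Fin k → Fin n, (∏ i, A i (p i)) * det (B.submatrix p id) ≠ 0 →
      Function.Injective p := by
    intro p hp i j hij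
    by_contra hne
    exact hp (by rw [det_zero_of_row_eq hne (by ext; simp [hij]), mul_zero])
  have hexpand : ∀ g : Fin k → Fin n, det (A.submatrix id g) * det (B.submatrix g id) =
      ∑ σ : Equiv.Perm (Fin k), (∏ i, A i (g (σ i))) * det (B.submatrix (g ∘ σ) id) := by
    intro g
    rw [← det_transpose, det_apply', sum_mul]
    refine sum_congr rfl fun σ _ => ?_
    rw [show B.submatrix (g ∘ σ) id = (B.submatrix g id).submatrix σ id from rfl, det_permute]
    simp only [transpose_apply, submatrix_apply, id]
    ring
  rw [det_mul_eq_sum_prod_mul_det_submatrix, ← sum_filter_of_ne fun p _ => hinjective p,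
    sum_congr rfl fun g _ => hexpand g, ← sum_product']
  symm
  -- every injective `p` factors uniquely as `g ∘ σ` with `g` strictly monotone
  refine sum_bij (fun gσ _ => gσ.1 ∘ gσ.2) ?_ ?_ ?_ fun _ _ => rfl
  · simp only [mem_product, mem_filter, mem_univ, true_and, and_true]
    exact fun gσ hg => hg.injective.comp gσ.2.injective
  · simp only [mem_product, mem_filter, mem_univ, true_and, and_true]
    rintro ⟨g, σ⟩ hg ⟨g', σ'⟩ hg' h
    have hgg : g = g' := (hg.range_inj hg').mp <| by
      simpa only [Set.range_comp, σ.range_eq_univ, σ'.range_eq_univ, Set.image_univ]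
        using congrArg Set.range h
    subst hgg
    exact Prod.ext rfl (Equiv.ext fun i => hg.injective (congrFun h i))
  · simp only [mem_product, mem_filter, mem_univ, true_and, and_true]
    intro p hp
    refine ⟨(p ∘ Tuple.sort p, (Tuple.sort p)⁻¹),
      (Tuple.monotone_sort p).strictMono_of_injective (hp.comp (Tuple.sort p).injective), ?_⟩
    ext i
    simp

end CauchyBinet

section Gram

variable {k n : ℕ}

theorem det_conjTranspose_mul_self_eq_sum_normSq (A : Matrix (Fin n) (Fin k) ℂ) :
    det (Aᴴ * A) = ((∑ g ∈ univ.filter (StrictMono : (Fin k → Fin n) → Prop),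
      Complex.normSq (det (A.submatrix g id)) : ℝ) : ℂ) := by
  rw [det_mul_eq_sum_strictMono, Complex.ofReal_sum]
  refine sum_congr rfl fun g _ => ?_
  rw [show Aᴴ.submatrix id g = (A.submatrix g id)ᴴ from rfl, det_conjTranspose,
    Complex.normSq_eq_conj_mul_self]
  rfl

theorem normSq_det_submatrix_le_re_det_conjTranspose_mul_self {A : Matrix (Fin n) (Fin k) ℂ}
    {g : Fin k → Fin n} (hg : StrictMono g) :
    Complex.normSq (det (A.submatrix g id)) ≤ (det (Aᴴ * A)).re := by
  rw [det_conjTranspose_mul_self_eq_sum_normSq, Complex.ofReal_re]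
  exact single_le_sum (f := fun g => Complex.normSq (det (A.submatrix g id)))
    (fun _ _ => Complex.normSq_nonneg _) (mem_filter.mpr ⟨mem_univ _, hg⟩)

/-- Writing `Yᴴ D Y = Zᴴ Z` with `Z = √D Y`, Cauchy–Binet expresses the determinant as a
combination of the products `∏ d (g p)` with weights `|det Y_g|²` summing to `det (Yᴴ Y) = 1`. -/
theorem re_det_conjTranspose_mul_diagonal_mul_le {Y : Matrix (Fin n) (Fin k) ℂ}
    (hY : Yᴴ * Y = 1) {d : Fin n → ℝ} (hd : ∀ i, 0 ≤ d i) {c : ℝ}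
    (hc : ∀ g : Fin k → Fin n, StrictMono g → ∏ p, d (g p) ≤ c) :
    (det (Yᴴ * diagonal (fun i => (d i : ℂ)) * Y)).re ≤ c := by
  set Z := diagonal (fun i => (√(d i) : ℂ)) * Y
  have hZ : Zᴴ * Z = Yᴴ * diagonal (fun i => (d i : ℂ)) * Y := by
    simp only [Z, conjTranspose_mul, diagonal_conjTranspose, Matrix.mul_assoc,
      ← Matrix.mul_assoc (diagonal _), diagonal_mul_diagonal]
    congr 3
    ext i
    simp [← Complex.ofReal_mul, Real.mul_self_sqrt (hd i)]
  have hZg : ∀ g : Fin k → Fin n, Complex.normSq (det (Z.submatrix g id)) =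
      (∏ p, d (g p)) * Complex.normSq (det (Y.submatrix g id)) := by
    intro g
    rw [show Z.submatrix g id = diagonal (fun p => (√(d (g p)) : ℂ)) * Y.submatrix g id by
      ext p q; simp [Z, mul_apply, diagonal_apply], det_mul, det_diagonal, map_mul, map_prod]
    simp [Real.mul_self_sqrt (hd _)]
  have hYsum := det_conjTranspose_mul_self_eq_sum_normSq Y
  rw [hY, det_one] at hYsum
  rw [← hZ, det_conjTranspose_mul_self_eq_sum_normSq, Complex.ofReal_re]
  calc ∑ g ∈ univ.filter StrictMono, Complex.normSq (det (Z.submatrix g id))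
      ≤ ∑ g ∈ univ.filter StrictMono, c * Complex.normSq (det (Y.submatrix g id)) := by
        refine sum_le_sum fun g hg => ?_
        rw [hZg]
        exact mul_le_mul_of_nonneg_right (hc g (mem_filter.mp hg).2) (Complex.normSq_nonneg _)
    _ = c := by rw [← mul_sum, Complex.ofReal_eq_one.mp hYsum.symm, mul_one]

theorem PosSemidef.re_det_submatrix_le {N : Matrix (Fin n) (Fin n) ℂ} (hN : N.PosSemidef)
    {f : Fin k → Fin n} (hf : Function.Injective f) {c : ℝ}
    (hc : ∀ g : Fin k → Fin n, StrictMono g → ∏ p, hN.isHermitian.eigenvalues (g p) ≤ c) :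
    (det (N.submatrix f f)).re ≤ c := by
  set W : Matrix (Fin n) (Fin n) ℂ := ↑hN.isHermitian.eigenvectorUnitary
  set e := hN.isHermitian.eigenvalues
  have hWW : W * Wᴴ = 1 := Matrix.mem_unitaryGroup_iff.mp hN.isHermitian.eigenvectorUnitary.2
  have hN' : N = W * diagonal (fun i => (e i : ℂ)) * Wᴴ := by
    have := hN.isHermitian.spectral_theorem
    rwa [Unitary.conjStarAlgAut_apply, star_eq_conjTranspose] at this
  set Y := Wᴴ.submatrix id f
  have hsub : N.submatrix f f = Yᴴ * diagonal (fun i => (e i : ℂ)) * Y := by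
    rw [hN']; ext p q; simp [Y, mul_apply]
  have hY : Yᴴ * Y = 1 := by
    have : Yᴴ * Y = (W * Wᴴ).submatrix f f := by ext p q; simp [Y, mul_apply]
    rw [this, hWW, submatrix_one _ hf]
  rw [hsub]
  exact re_det_conjTranspose_mul_diagonal_mul_le hY hN.eigenvalues_nonneg hc

open Polynomial in
theorem IsHermitian.map_eigenvalues_eq_of_det_sub_smul {N : Matrix (Fin n) (Fin n) ℂ}
    (hN : N.IsHermitian) {w : Fin n → ℝ} (h : ∀ x : ℂ, det (N - x • 1) = ∏ j, ((w j : ℂ) - x)) :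
    Multiset.map hN.eigenvalues univ.val = Multiset.map w univ.val := by
  have hpoly : N.charpoly = ∏ j, (X - C (w j : ℂ)) := by
    refine Polynomial.funext fun x => ?_
    rw [eval_charpoly, eval_prod, show scalar (Fin n) x - N = -(N - x • 1) by
      rw [neg_sub, smul_one_eq_diagonal]; rfl, det_neg, h, ← card_univ, ← prod_neg]
    simp
  have hroots := hN.roots_charpoly_eq_eigenvalues
  rw [hpoly, roots_prod _ _ (prod_ne_zero_iff.mpr fun j _ => X_sub_C_ne_zero _)] at hroots
  simp only [roots_X_sub_C, Multiset.bind_singleton] at hroots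
  simpa [Multiset.map_map, Function.comp_def] using (congrArg (Multiset.map Complex.re) hroots).symm

theorem det_conjTranspose_mul_sub_smul (G B : Matrix (Fin n) (Fin n) ℂ) (x : ℂ) :
    det ((G * B)ᴴ * (G * B) - x • (Bᴴ * B)) = det (Bᴴ * B) * det (Gᴴ * G - x • 1) := by
  have : (G * B)ᴴ * (G * B) - x • (Bᴴ * B) = Bᴴ * (Gᴴ * G - x • 1) * B := by
    simp only [conjTranspose_mul, Matrix.mul_sub, Matrix.sub_mul, Matrix.mul_smul,
      Matrix.smul_mul, Matrix.mul_one, Matrix.mul_assoc]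
  rw [this, det_mul, det_mul, det_mul]
  ring

end Gram

section Triangular

variable {m R K : Type*} [Fintype m] [LinearOrder m]

theorem IsUpperTriangular.mul_apply_self [CommRing R] {A B : Matrix m m R}
    (hA : A.IsUpperTriangular) (hB : B.IsUpperTriangular) (i : m) :
    (A * B) i i = A i i * B i i := by
  rw [mul_apply]
  refine sum_eq_single i (fun l _ hli => ?_) fun hi => absurd (mem_univ i) hi
  rcases lt_or_gt_of_ne hli with hl | hl
  · rw [hA hl, zero_mul]
  · rw [hB hl, mul_zero]

variable [DecidableEq m] [Field K] {B : Matrix m m K}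

theorem IsUpperTriangular.inv (hB : B.IsUpperTriangular) : B⁻¹.IsUpperTriangular := by
  by_cases hdet : IsUnit B.det
  · have := B.invertibleOfIsUnitDet hdet
    exact blockTriangular_inv_of_blockTriangular hB
  · rw [nonsing_inv_apply_not_isUnit B hdet]
    exact blockTriangular_zero

theorem IsUpperTriangular.inv_apply_self (hB : B.IsUpperTriangular) (hdet : IsUnit B.det)
    (i : m) : B⁻¹ i i = (B i i)⁻¹ :=
  eq_inv_of_mul_eq_one_left <| by
    rw [← hB.inv.mul_apply_self hB, nonsing_inv_mul B hdet, one_apply_eq]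

end Triangular

end Matrix

namespace NetMod

section Majorization

variable {k n : ℕ}

theorem PProd_eq_prod_castLE (w : Fin n → ℝ) (hk : k ≤ n) :
    PProd w k = ∏ p : Fin k, w (Fin.castLE hk p) := by
  have : univ.filter (fun j : Fin n => (j : ℕ) < k) = univ.map (Fin.castLEEmb hk) := by
    ext j
    simp only [mem_filter, mem_univ, true_and, mem_map, Fin.castLEEmb_apply]
    exact ⟨fun hj => ⟨⟨j, hj⟩, rfl⟩, by rintro ⟨i, _, rfl⟩; exact i.2⟩
  rw [PProd, this, prod_map]
  rfl

theorem prod_le_PProd_of_antitone {w : Fin n → ℝ} (hw : Antitone w) (h0 : ∀ j, 0 ≤ w j)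
    {g : Fin k → Fin n} (hg : Function.Injective g) : ∏ p, w (g p) ≤ PProd w k := by
  have hk : k ≤ n := by simpa using Fintype.card_le_of_injective g hg
  set h := g ∘ Tuple.sort g
  have hh : StrictMono h := (Tuple.monotone_sort g).strictMono_of_injective
    (hg.comp (Tuple.sort g).injective)
  have hle : ∀ p : Fin k, (p : ℕ) ≤ h p := fun p => calc
    (p : ℕ) = #(Iio p) := (Fin.card_Iio p).symm
    _ ≤ #(Iio (h p)) := card_le_card_of_injOn h
      (fun q hq => by simpa using hh (by simpa using hq)) hh.injective.injOn
    _ = h p := Fin.card_Iio _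
  rw [PProd_eq_prod_castLE w hk, ← Equiv.prod_comp (Tuple.sort g) (fun p => w (g p))]
  exact prod_le_prod (fun _ _ => h0 _) fun p _ => hw (Fin.le_def.mpr (hle p))

theorem exists_card_eq_PProd_sortDesc_eq (x : Fin n → ℝ) (hk : k ≤ n) :
    ∃ S : Finset (Fin n), S.card = k ∧ PProd (sortDesc x) k = ∏ j ∈ S, x j := by
  set σ := Fin.revPerm.trans (Tuple.sort x)
  refine ⟨(univ.filter (fun j : Fin n => (j : ℕ) < k)).map σ.toEmbedding, ?_, ?_⟩
  · rw [card_map, Fin.card_filter_val_lt, min_eq_right hk]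
  · rw [prod_map]
    rfl

theorem sortDesc_eq_self_of_antitone {x : Fin n → ℝ} (hx : Antitone x) : sortDesc x = x := by
  have hrev : x ∘ Fin.revPerm = x ∘ Tuple.sort x :=
    Tuple.comp_sort_eq_comp_iff_monotone.mpr fun i j hij => hx (Fin.rev_le_rev.mpr hij)
  funext i
  simpa [sortDesc] using (congrFun hrev i.rev).symm

theorem prod_normSq_diag_le_PProd {G : Matrix (Fin n) (Fin n) ℂ} (hG : G.IsUpperTriangular)
    {w : Fin n → ℝ} (hw : Antitone w)
    (hchar : ∀ x : ℂ, det (Gᴴ * G - x • 1) = ∏ j, ((w j : ℂ) - x)) (S : Finset (Fin n)) :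
    ∏ j ∈ S, Complex.normSq (G j j) ≤ PProd w S.card := by
  have hN : (Gᴴ * G).PosSemidef := posSemidef_conjTranspose_mul_self G
  obtain ⟨σ, hσ⟩ := exists_perm_eq_comp_of_map_univ_eq
    (hN.isHermitian.map_eigenvalues_eq_of_det_sub_smul hchar)
  have hw0 : ∀ j, 0 ≤ w j := fun j => by
    simpa [hσ] using hN.eigenvalues_nonneg (σ.symm j)
  set f := S.orderEmbOfFin rfl
  have hdiag : ∏ j ∈ S, Complex.normSq (G j j) = Complex.normSq (det (G.submatrix f f)) := by
    have htri : (G.submatrix f f).IsUpperTriangular := fun p q hpq => hG (f.strictMono hpq)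
    rw [det_of_isUpperTriangular htri, map_prod]
    conv_lhs => rw [← map_orderEmbOfFin_univ S rfl, prod_map]
    rfl
  calc ∏ j ∈ S, Complex.normSq (G j j)
      = Complex.normSq (det ((G.submatrix id f).submatrix f id)) := hdiag
    _ ≤ (det ((G.submatrix id f)ᴴ * G.submatrix id f)).re :=
      normSq_det_submatrix_le_re_det_conjTranspose_mul_self f.strictMono
    _ = (det ((Gᴴ * G).submatrix f f)).re := rfl
    _ ≤ PProd w S.card := hN.re_det_submatrix_le f.injective fun g hg => by
      rw [hσ]
      exact prod_le_PProd_of_antitone hw hw0 (σ.injective.comp hg.injective)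

theorem mulMaj_of_isUpperTriangular {G : Matrix (Fin n) (Fin n) ℂ} (hG : G.IsUpperTriangular)
    {r μ : Fin n → ℝ} (hr : ∀ j, 0 < r j) (hGr : ∀ j, G j j = r j) (hμ : Antitone μ)
    (hμ0 : ∀ j, 0 < μ j)
    (hchar : ∀ x : ℂ, det (Gᴴ * G - x • 1) = ∏ j, (((μ j ^ 2 : ℝ) : ℂ) - x)) :
    MulMaj μ r := by
  have hnormSq : ∀ S : Finset (Fin n), ∏ j ∈ S, Complex.normSq (G j j) = (∏ j ∈ S, r j) ^ 2 :=
    fun S => by simp only [hGr, Complex.normSq_ofReal, sq, prod_mul_distrib]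
  constructor
  · have hdet := hchar 0
    simp only [zero_smul, sub_zero, det_mul, det_conjTranspose, det_of_isUpperTriangular hG, hGr,
      ← Complex.ofReal_prod, Complex.star_def, Complex.conj_ofReal, ← sq, prod_pow] at hdet
    exact ((pow_left_inj₀ (prod_nonneg fun j _ => (hr j).le)
      (prod_nonneg fun j _ => (hμ0 j).le) two_ne_zero).mp (by exact_mod_cast hdet)).symm
  · intro k _ hkn
    obtain ⟨S, rfl, hS⟩ := exists_card_eq_PProd_sortDesc_eq r hkn.le
    have hsq : Antitone fun j => μ j ^ 2 := fun i j hij => pow_le_pow_left₀ (hμ0 j).le (hμ hij) 2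
    have key := prod_normSq_diag_le_PProd hG hsq hchar S
    rw [hnormSq, show PProd (fun j => μ j ^ 2) S.card = PProd μ S.card ^ 2 from prod_pow ..] at key
    rw [hS, sortDesc_eq_self_of_antitone hμ]
    exact (pow_le_pow_iff_left₀ (prod_nonneg fun j _ => (hr j).le)
      (prod_nonneg fun j _ => (hμ0 j).le) two_ne_zero).mp key

end Majorization

section Triangularization

variable {m m1 m2 n : ℕ}

theorem squarePart_isUpperTriangular (h : n ≤ m) {T : Matrix (Fin m) (Fin n) ℂ}
    (hT : GenUpperTri T) : (squarePart h T).IsUpperTriangular :=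
  fun _ _ hij => hT _ _ hij

theorem PosRealDiag.squarePart_apply_self {h : n ≤ m} {T : Matrix (Fin m) (Fin n) ℂ}
    (hd : PosRealDiag h T) (j : Fin n) : squarePart h T j j = ((T (Fin.castLE h j) j).re : ℂ) :=
  Complex.ext rfl (hd j).2

theorem PosRealDiag.isUnit_det_squarePart {h : n ≤ m} {T : Matrix (Fin m) (Fin n) ℂ}
    (hd : PosRealDiag h T) (hT : GenUpperTri T) : IsUnit (squarePart h T).det := by
  rw [det_of_isUpperTriangular (squarePart_isUpperTriangular h hT), isUnit_iff_ne_zero,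
    prod_ne_zero_iff]
  exact fun j _ => by rw [hd.squarePart_apply_self]; exact_mod_cast (hd j).1.ne'

theorem conjTranspose_mul_self_squarePart (h : n ≤ m) {T : Matrix (Fin m) (Fin n) ℂ}
    (hT : GenUpperTri T) : (squarePart h T)ᴴ * squarePart h T = Tᴴ * T := by
  ext j l
  simp only [mul_apply, conjTranspose_apply, squarePart, submatrix_apply, id]
  refine (sum_map univ (Fin.castLEEmb h) fun i => star (T i j) * T i l).symm.trans ?_
  refine sum_subset (subset_univ _) fun i _ hi => ?_
  have hni : n ≤ i := not_lt.mp fun hlt => hi (mem_map.mpr ⟨⟨i, hlt⟩, mem_univ _, rfl⟩)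
  rw [hT i j (j.2.trans_le hni), star_zero, zero_mul]

theorem conjTranspose_mul_self_eq_squarePart (h : n ≤ m) {U : Matrix (Fin m) (Fin m) ℂ}
    (hU : IsUnitary U) {T : Matrix (Fin m) (Fin n) ℂ} (hT : GenUpperTri T)
    (V : Matrix (Fin n) (Fin n) ℂ) :
    (U * T * Vᴴ)ᴴ * (U * T * Vᴴ) = (squarePart h T * Vᴴ)ᴴ * (squarePart h T * Vᴴ) := by
  simp only [conjTranspose_mul, Matrix.mul_assoc]
  rw [← Matrix.mul_assoc Uᴴ, hU, Matrix.one_mul, ← Matrix.mul_assoc Tᴴ,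
    ← Matrix.mul_assoc (squarePart h T)ᴴ, conjTranspose_mul_self_squarePart h hT]

variable {A1 : Matrix (Fin m1) (Fin n) ℂ} {A2 : Matrix (Fin m2) (Fin n) ℂ}
  {U1 : Matrix (Fin m1) (Fin m1) ℂ} {U2 : Matrix (Fin m2) (Fin m2) ℂ} {V : Matrix (Fin n) (Fin n) ℂ}
  {T1 : Matrix (Fin m1) (Fin n) ℂ} {T2 : Matrix (Fin m2) (Fin n) ℂ}

theorem JointTriang.det_conjTranspose_mul_self_ne_zero (h2 : n ≤ m2)
    (hJT : JointTriang A1 A2 U1 U2 V T1 T2) (hR2 : IsUnit (squarePart h2 T2).det) :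
    det (A2ᴴ * A2) ≠ 0 := by
  obtain ⟨-, hU2, hV, -, hT2, -, rfl⟩ := hJT
  have hVdet : det Vᴴ ≠ 0 := left_ne_zero_of_mul_eq_one (by rw [← det_mul, hV, det_one])
  have hB : det (squarePart h2 T2 * Vᴴ) ≠ 0 := by rw [det_mul]; exact mul_ne_zero hR2.ne_zero hVdet
  rw [conjTranspose_mul_self_eq_squarePart h2 hU2 hT2, det_mul, det_conjTranspose]
  exact mul_ne_zero (star_ne_zero.mpr hB) hB

theorem JointTriang.det_sub_smul_eq (h1 : n ≤ m1) (h2 : n ≤ m2)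
    (hJT : JointTriang A1 A2 U1 U2 V T1 T2) (hR2 : IsUnit (squarePart h2 T2).det) (x : ℂ) :
    det (A1ᴴ * A1 - x • (A2ᴴ * A2)) = det (A2ᴴ * A2) *
      det ((squarePart h1 T1 * (squarePart h2 T2)⁻¹)ᴴ * (squarePart h1 T1 * (squarePart h2 T2)⁻¹)
        - x • 1) := by
  obtain ⟨hU1, hU2, -, hT1, hT2, rfl, rfl⟩ := hJT
  have hGB : squarePart h1 T1 * (squarePart h2 T2)⁻¹ * (squarePart h2 T2 * Vᴴ) =
      squarePart h1 T1 * Vᴴ := by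
    rw [Matrix.mul_assoc, ← Matrix.mul_assoc _⁻¹, nonsing_inv_mul _ hR2, Matrix.one_mul]
  rw [conjTranspose_mul_self_eq_squarePart h1 hU1 hT1,
    conjTranspose_mul_self_eq_squarePart h2 hU2 hT2, ← hGB, det_conjTranspose_mul_sub_smul]

end Triangularization

end NetMod

theorem majorization_of_joint_triangularization_general
    {m1 m2 n : ℕ} (h1 : n ≤ m1) (h2 : n ≤ m2)
    (A1 : Matrix (Fin m1) (Fin n) ℂ) (A2 : Matrix (Fin m2) (Fin n) ℂ)
    (U1 : Matrix (Fin m1) (Fin m1) ℂ) (U2 : Matrix (Fin m2) (Fin m2) ℂ)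
    (V : Matrix (Fin n) (Fin n) ℂ)
    (T1 : Matrix (Fin m1) (Fin n) ℂ) (T2 : Matrix (Fin m2) (Fin n) ℂ)
    (hJT : NetMod.JointTriang A1 A2 U1 U2 V T1 T2)
    (hd1 : NetMod.PosRealDiag h1 T1) (hd2 : NetMod.PosRealDiag h2 T2)
    (μ : Fin n → ℝ) (hμ : NetMod.IsGSV A1 A2 μ) :
    NetMod.MulMaj μ
      (fun j => (T1 (Fin.castLE h1 j) j).re / (T2 (Fin.castLE h2 j) j).re) := by
  have hT1 : NetMod.GenUpperTri T1 := hJT.2.2.2.1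
  have hT2 : NetMod.GenUpperTri T2 := hJT.2.2.2.2.1
  obtain ⟨hμ_anti, hμ_pos, hμ_det⟩ := hμ
  have hR1 := NetMod.squarePart_isUpperTriangular h1 hT1
  have hR2 := NetMod.squarePart_isUpperTriangular h2 hT2
  have hR2det := hd2.isUnit_det_squarePart hT2
  refine NetMod.mulMaj_of_isUpperTriangular (hR1.mul hR2.inv)
    (fun j => div_pos (hd1 j).1 (hd2 j).1) (fun j => ?_) hμ_anti hμ_pos fun x => ?_
  · rw [hR1.mul_apply_self hR2.inv, hR2.inv_apply_self hR2det, hd1.squarePart_apply_self,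
      hd2.squarePart_apply_self]
    push_cast
    rfl
  · refine mul_left_cancel₀ (hJT.det_conjTranspose_mul_self_ne_zero h2 hR2det) ?_
    rw [← hJT.det_sub_smul_eq h1 h2 hR2det, hμ_det x]
    push_cast
    rfl

/-- Theorem 1, converse. Any joint unitary triangularization with
positive real diagonals has a diagonal-ratios vector majorized by `μ(A1,A2)`. -/
theorem majorization_of_joint_triangularization
    {m1 m2 n : ℕ} (h1 : n ≤ m1) (h2 : n ≤ m2)
    (A1 : Matrix (Fin m1) (Fin n) ℂ) (A2 : Matrix (Fin m2) (Fin n) ℂ)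
    (hA1 : A1.rank = n) (hA2 : A2.rank = n)
    (U1 : Matrix (Fin m1) (Fin m1) ℂ) (U2 : Matrix (Fin m2) (Fin m2) ℂ)
    (V : Matrix (Fin n) (Fin n) ℂ)
    (T1 : Matrix (Fin m1) (Fin n) ℂ) (T2 : Matrix (Fin m2) (Fin n) ℂ)
    (hJT : NetMod.JointTriang A1 A2 U1 U2 V T1 T2)
    (hd1 : NetMod.PosRealDiag h1 T1) (hd2 : NetMod.PosRealDiag h2 T2)
    (μ : Fin n → ℝ) (hμ : NetMod.IsGSV A1 A2 μ) :
    NetMod.MulMaj μ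
      (fun j => (T1 (Fin.castLE h1 j) j).re / (T2 (Fin.castLE h2 j) j).re) :=
  majorization_of_joint_triangularization_general h1 h2 A1 A2 U1 U2 V T1 T2 hJT hd1 hd2 μ hμ
end

section
/- Let F be an m×n complex matrix, let G be the (m+n)×n matrix obtained by stacking F on top of the n×n identity matrix, and let G = U T V* be a factorization in which U ((m+n)×(m+n)) and V (n×n) are unitary and T is generalized upper-triangular with positive real diagonal entries. Let W be the m×n submatrix of U formed by its first m rows and first n columns, and set T̃ = W* F V. Then for every j = 1, …, n: |T̃_{jj}|² = ((T_{jj})² − 1) · ( (W*W)_{jj} + ∑_{l=1}^{j−1} |T̃_{j,l}|² ). Equivalently, whenever the second factor is positive, the signal-to-interference-and-noise ratio S_j = |T̃_{jj}|² / ((W*W)_{jj} + ∑_{l=1}^{j−1} |T̃_{j,l}|²) of the j-th subchannel of the MMSE successive interference cancellation receiver satisfies 1 + S_j = (T_{jj})². -/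
open Matrix BigOperators Finset
open scoped ComplexOrder

/-! Write `R` for the top `n × n` block of `T` (the rows below it vanish), and `W`, `B` for the top
`m` and bottom `n` rows of the first `n` columns of `U`. Then `[F; I] V = [W; B] R`, i.e.
`F V = W R` and `V = B R`, and `[W; B]` has orthonormal columns: `WᴴW + BᴴB = 1`. Hence
`B = V R⁻¹`, `BᴴB = R⁻ᴴ R⁻¹`, and `T̃ = WᴴW R = R - R⁻ᴴ`. As `R` is upper triangular with
diagonal `t_j`, `R⁻ᴴ` is lower triangular with diagonal `1 / t_j`, so `T̃_jj = t_j - 1 / t_j`,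
`|T̃_jl| = |(R⁻¹)_lj|` for `l < j`, and `(WᴴW)_jj = 1 - 1 / t_j² - ∑_{l<j} |(R⁻¹)_lj|²`.
Thus the noise-plus-interference term is `1 - 1 / t_j²`, and
`(t_j - 1 / t_j)² = (t_j² - 1)(1 - 1 / t_j²)`. -/

theorem Finset.sum_eq_add_sum_filter_lt {ι M : Type*} [Fintype ι] [LinearOrder ι]
    [AddCommMonoid M] (f : ι → M) {j : ι} (hf : ∀ k, j < k → f k = 0) :
    ∑ k, f k = f j + ∑ k ∈ univ.filter (· < j), f k := by
  rw [← sum_filter_add_sum_filter_not univ (· < j), add_comm]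
  congr 1
  refine sum_eq_single_of_mem j (by simp) fun k hk hkj => hf k ?_
  exact lt_of_le_of_ne (not_lt.mp (mem_filter.mp hk).2) (Ne.symm hkj)

namespace Matrix

theorem mul_eq_submatrix_mul_submatrix {l o p n α : Type*} [Fintype o] [Fintype p]
    [NonUnitalNonAssocSemiring α] (U : Matrix l o α) (T : Matrix o n α) {c : p → o}
    (hc : Function.Injective c) (hT : ∀ k ∉ Set.range c, ∀ j, T k j = 0) :
    U * T = U.submatrix id c * T.submatrix c id := by
  ext i j
  refine (Fintype.sum_of_injective c hc _ _ (fun k hk => ?_) fun _ => rfl).symm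
  simp [hT k hk]

theorem conjTranspose_submatrix_mul_submatrix_eq_one {l o p α : Type*} [Fintype l] [Fintype o]
    [DecidableEq l] [DecidableEq o] [DecidableEq p] [Semiring α] [StarRing α] {U : Matrix l l α}
    (hU : Uᴴ * U = 1) (e : o ≃ l) {c : p → l} (hc : Function.Injective c) :
    (U.submatrix e c)ᴴ * U.submatrix e c = 1 := by
  rw [conjTranspose_submatrix, submatrix_mul_equiv, hU, submatrix_one _ hc]

theorem re_conjTranspose_mul_self_apply {m n : Type*} [Fintype m] (X : Matrix m n ℂ) (j : n) :
    ((Xᴴ * X) j j).re = ∑ k, Complex.normSq (X k j) := by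
  simp [mul_apply, Complex.re_sum, Complex.normSq_apply]

section Triangular

variable {ι : Type*} [Fintype ι] [LinearOrder ι]

theorem BlockTriangular.inv_apply_self {K : Type*} [Field K] {R : Matrix ι ι K}
    (hR : R.BlockTriangular id) (hdet : IsUnit R.det) (j : ι) : R⁻¹ j j = (R j j)⁻¹ := by
  have : Invertible R := R.invertibleOfIsUnitDet hdet
  have hinv := blockTriangular_inv_of_blockTriangular hR
  have h : (R * R⁻¹) j j = R j j * R⁻¹ j j := by
    rw [mul_apply]
    refine sum_eq_single j (fun k _ hk => ?_) (by simp)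
    rcases hk.lt_or_gt with h | h
    · rw [hR h, zero_mul]
    · rw [hinv h, mul_zero]
  rw [mul_nonsing_inv R hdet, one_apply_eq] at h
  exact eq_inv_of_mul_eq_one_right h.symm

theorem normSq_sub_conjTranspose_inv_apply_self {R : Matrix ι ι ℂ} (hR : R.BlockTriangular id)
    (hdet : IsUnit R.det) {j : ι} {t : ℝ} (hj : R j j = t) :
    Complex.normSq ((R - R⁻¹ᴴ) j j) = (t ^ 2 - 1) *
      (((1 - R⁻¹ᴴ * R⁻¹) j j).re
        + ∑ l ∈ univ.filter (· < j), Complex.normSq ((R - R⁻¹ᴴ) j l)) := by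
  have : Invertible R := R.invertibleOfIsUnitDet hdet
  have ht : t ≠ 0 := by
    rw [det_of_isUpperTriangular hR, isUnit_iff_ne_zero, prod_ne_zero_iff] at hdet
    exact_mod_cast hj ▸ hdet j (mem_univ j)
  have hinv := blockTriangular_inv_of_blockTriangular hR
  have hinvj : R⁻¹ j j = (t⁻¹ : ℝ) := by rw [hR.inv_apply_self hdet, hj, Complex.ofReal_inv]
  have hdiag : (R - R⁻¹ᴴ) j j = (t - t⁻¹ : ℝ) := by simp [hj, hinvj]
  have hbelow : ∀ l ∈ univ.filter (· < j),
      Complex.normSq ((R - R⁻¹ᴴ) j l) = Complex.normSq (R⁻¹ l j) := by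
    intro l hl
    simp [hR (mem_filter.mp hl).2]
  have hcol : ((R⁻¹ᴴ * R⁻¹) j j).re
      = t⁻¹ ^ 2 + ∑ l ∈ univ.filter (· < j), Complex.normSq (R⁻¹ l j) := by
    have hzero : ∀ k, j < k → Complex.normSq (R⁻¹ k j) = 0 := fun k hk => by
      rw [hinv hk, map_zero]
    rw [re_conjTranspose_mul_self_apply, sum_eq_add_sum_filter_lt _ hzero, hinvj,
      Complex.normSq_ofReal, sq]
  rw [sum_congr rfl hbelow, hdiag, sub_apply, one_apply_eq, Complex.sub_re, Complex.one_re, hcol,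
    Complex.normSq_ofReal]
  field_simp
  ring

end Triangular

section Stacked

variable {K m n : Type*} [Field K] [StarRing K] [Fintype m] [Fintype n] [DecidableEq n]
  {F W : Matrix m n K} {B V R : Matrix n n K}

theorem conjTranspose_mul_self_eq_one_sub_of_eq_mul (hV : Vᴴ * V = 1) (hdet : IsUnit R.det)
    (hVB : V = B * R) (hWB : Wᴴ * W + Bᴴ * B = 1) : Wᴴ * W = 1 - R⁻¹ᴴ * R⁻¹ := by
  have hB : B = V * R⁻¹ := by rw [hVB, mul_nonsing_inv_cancel_right _ _ hdet]
  have hBB : Bᴴ * B = R⁻¹ᴴ * R⁻¹ := by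
    rw [hB, conjTranspose_mul, Matrix.mul_assoc, ← Matrix.mul_assoc Vᴴ, hV, Matrix.one_mul]
  rw [← hBB]
  exact eq_sub_of_add_eq hWB

theorem conjTranspose_mul_mul_eq_sub_of_eq_mul (hV : Vᴴ * V = 1) (hdet : IsUnit R.det)
    (hFV : F * V = W * R) (hVB : V = B * R) (hWB : Wᴴ * W + Bᴴ * B = 1) :
    Wᴴ * F * V = R - R⁻¹ᴴ :=
  calc Wᴴ * F * V = Wᴴ * W * R := by rw [Matrix.mul_assoc, hFV, Matrix.mul_assoc]
    _ = (1 - R⁻¹ᴴ * R⁻¹) * R := by rw [conjTranspose_mul_self_eq_one_sub_of_eq_mul hV hdet hVB hWB]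
    _ = R - R⁻¹ᴴ := by rw [sub_mul, Matrix.one_mul, Matrix.mul_assoc, nonsing_inv_mul _ hdet,
      Matrix.mul_one]

end Stacked

end Matrix

namespace NetMod

theorem augment_submatrix_finSumFinEquiv {m n : ℕ} (F : Matrix (Fin m) (Fin n) ℂ) :
    (augment F).submatrix finSumFinEquiv id = fromRows F 1 := by
  ext (i | i) j
  · simp [augment]
  · simp [augment, one_apply, Fin.ext_iff]

theorem fromRows_mul_eq_of_augment_eq {m n : ℕ} {F : Matrix (Fin m) (Fin n) ℂ}
    {U : Matrix (Fin (m + n)) (Fin (m + n)) ℂ} {V : Matrix (Fin n) (Fin n) ℂ}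
    {T : Matrix (Fin (m + n)) (Fin n) ℂ} (hV : IsUnitary V) (hT : GenUpperTri T)
    (hdec : augment F = U * T * Vᴴ) :
    fromRows F 1 * V = U.submatrix finSumFinEquiv (Fin.castLE (Nat.le_add_left n m)) *
      T.submatrix (Fin.castLE (Nat.le_add_left n m)) id := by
  have hUT := mul_eq_submatrix_mul_submatrix U T (Fin.castLE_injective (Nat.le_add_left n m))
    fun k hk l => hT k l (lt_of_lt_of_le l.isLt (not_lt.mp fun h => hk ⟨⟨k, h⟩, rfl⟩))
  rw [← augment_submatrix_finSumFinEquiv, ← submatrix_id_id V,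
    ← submatrix_mul _ _ _ _ _ Function.bijective_id, hdec, Matrix.mul_assoc, hV,
    Matrix.mul_one, hUT, submatrix_mul _ _ _ _ _ Function.bijective_id, submatrix_id_id,
    submatrix_submatrix, Function.comp_id, Function.id_comp]

end NetMod

/-- Proposition 1. For the MMSE-SIC receiver built from a unitary
triangularization `[F; I] = U T Vᴴ`, the SINR of the `j`-th stream satisfies
`1 + Sⱼ = (Tⱼⱼ)²`. -/
theorem mmse_sic_sinr
    {m n : ℕ} (F : Matrix (Fin m) (Fin n) ℂ)
    (U : Matrix (Fin (m + n)) (Fin (m + n)) ℂ) (V : Matrix (Fin n) (Fin n) ℂ)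
    (T : Matrix (Fin (m + n)) (Fin n) ℂ)
    (hU : NetMod.IsUnitary U) (hV : NetMod.IsUnitary V)
    (hT : NetMod.GenUpperTri T)
    (hTd : NetMod.PosRealDiag (Nat.le_add_left n m) T)
    (hdec : NetMod.augment F = U * T * Vᴴ)
    (W : Matrix (Fin m) (Fin n) ℂ)
    (hW : W = Matrix.of fun (i : Fin m) (j : Fin n) =>
      U (Fin.castLE (Nat.le_add_right m n) i) (Fin.castLE (Nat.le_add_left n m) j))
    (Ttil : Matrix (Fin n) (Fin n) ℂ) (hTtil : Ttil = Wᴴ * F * V) :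
    ∀ j : Fin n,
      (Complex.normSq (Ttil j j)
        = ((T (Fin.castLE (Nat.le_add_left n m) j) j).re ^ 2 - 1) *
          (((Wᴴ * W) j j).re
            + ∑ l ∈ Finset.univ.filter (fun l : Fin n => l < j),
                Complex.normSq (Ttil j l))) ∧
      (0 < ((Wᴴ * W) j j).re
            + ∑ l ∈ Finset.univ.filter (fun l : Fin n => l < j),
                Complex.normSq (Ttil j l) →
        1 + Complex.normSq (Ttil j j) /
            (((Wᴴ * W) j j).re
              + ∑ l ∈ Finset.univ.filter (fun l : Fin n => l < j),
                  Complex.normSq (Ttil j l))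
          = (T (Fin.castLE (Nat.le_add_left n m) j) j).re ^ 2) := by
  intro j
  set c := Fin.castLE (Nat.le_add_left n m)
  set R : Matrix (Fin n) (Fin n) ℂ := T.submatrix c id
  set B : Matrix (Fin n) (Fin n) ℂ := U.submatrix (Fin.natAdd m) c
  have hQ : U.submatrix finSumFinEquiv c = fromRows W B := by
    ext (i | i) l <;> simp [hW, B]; rfl
  have hGV := NetMod.fromRows_mul_eq_of_augment_eq hV hT hdec
  rw [hQ, fromRows_mul, fromRows_mul, Matrix.one_mul] at hGV
  obtain ⟨hFV, hVB⟩ := fromRows_inj hGV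
  have hWB := conjTranspose_submatrix_mul_submatrix_eq_one hU finSumFinEquiv
    (Fin.castLE_injective (Nat.le_add_left n m))
  rw [hQ, conjTranspose_fromRows_eq_fromCols_conjTranspose, fromCols_mul_fromRows] at hWB
  have hRtri : R.BlockTriangular id := fun a b h => hT (c a) b h
  have hRdiag : ∀ j, R j j = ((T (c j) j).re : ℂ) := fun j =>
    Complex.ext rfl (by simpa [R] using (hTd j).2)
  have hRdet : IsUnit R.det := by
    rw [det_of_isUpperTriangular hRtri, isUnit_iff_ne_zero, prod_ne_zero_iff]
    exact fun j _ => by rw [hRdiag]; exact_mod_cast (hTd j).1.ne'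
  have hsinr := normSq_sub_conjTranspose_inv_apply_self hRtri hRdet (hRdiag j)
  rw [← conjTranspose_mul_mul_eq_sub_of_eq_mul hV hRdet hFV hVB hWB,
    ← conjTranspose_mul_self_eq_one_sub_of_eq_mul hV hRdet hVB hWB, ← hTtil] at hsinr
  refine ⟨hsinr, fun hpos => ?_⟩
  rw [hsinr, mul_div_cancel_right₀ _ hpos.ne']
  ring
end

section
/- Call a 2-vector of positive reals mixed if one of its entries is at least 1 and the other is at most 1. Let H1 and H2 be complex matrices of proper dimensions, each with two columns, let C be a 2×2 Hermitian positive semi-definite matrix with positive semi-definite square root C^{1/2}, and for i = 1, 2 let G_i be the matrix obtained by stacking H_i C^{1/2} on top of the 2×2 identity matrix. If μ(H1,H2) is mixed, then μ(G1,G2) is mixed. -/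
open Matrix BigOperators Finset
open scoped ComplexOrder

lemma NetMod.aug_mul {m n : ℕ} (F : Matrix (Fin m) (Fin n) ℂ) :
    (NetMod.augment F)ᴴ * (NetMod.augment F) = Fᴴ * F + 1 := by
  ext a b
  simp only [Matrix.mul_apply, Matrix.conjTranspose_apply, Matrix.add_apply, NetMod.augment,
    Matrix.of_apply]
  rw [Fin.sum_univ_add]
  congr 1
  · apply Finset.sum_congr rfl
    intro i _
    have h : ((Fin.castAdd n i : Fin (m+n)) : ℕ) < m := i.2
    simp [h]
  · have key : ∀ i : Fin n, ¬ (((Fin.natAdd m i : Fin (m+n)) : ℕ) < m) := by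
      intro i; simp [Fin.natAdd]
    simp only [dif_neg (key _), Fin.natAdd, Nat.add_right_cancel_iff]
    simp [Fin.val_eq_val, Matrix.one_apply, apply_ite, eq_comm]

lemma NetMod.prod_nonpos_of_mixed (μ : Fin 2 → ℝ) (h0 : 0 < μ 0) (h1 : 0 < μ 1)
    (h : NetMod.Mixed μ) : (μ 0 ^ 2 - 1) * (μ 1 ^ 2 - 1) ≤ 0 := by
  rcases h with ⟨ha, hb⟩ | ⟨ha, hb⟩
  · exact mul_nonpos_iff.2 (Or.inr ⟨by nlinarith, by nlinarith⟩)
  · exact mul_nonpos_iff.2 (Or.inl ⟨by nlinarith, by nlinarith⟩)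

lemma NetMod.mixed_of_prod_nonpos (ν : Fin 2 → ℝ) (h0 : 0 < ν 0) (h1 : 0 < ν 1)
    (h : (ν 0 ^ 2 - 1) * (ν 1 ^ 2 - 1) ≤ 0) : NetMod.Mixed ν := by
  rcases le_total (ν 0) 1 with h0' | h0' <;> rcases le_total (ν 1) 1 with h1' | h1'
  · have e0 : (ν 0 ^ 2 - 1) ≤ 0 := by nlinarith
    have e1 : (ν 1 ^ 2 - 1) ≤ 0 := by nlinarith
    have he : (ν 0 ^ 2 - 1) * (ν 1 ^ 2 - 1) = 0 :=
      le_antisymm h (mul_nonneg_of_nonpos_of_nonpos e0 e1)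
    rcases mul_eq_zero.1 he with hz | hz
    · exact Or.inr ⟨h1', by nlinarith⟩
    · exact Or.inl ⟨h0', by nlinarith⟩
  · exact Or.inl ⟨h0', h1'⟩
  · exact Or.inr ⟨h1', h0'⟩
  · have e0 : 0 ≤ (ν 0 ^ 2 - 1) := by nlinarith
    have e1 : 0 ≤ (ν 1 ^ 2 - 1) := by nlinarith
    have he : (ν 0 ^ 2 - 1) * (ν 1 ^ 2 - 1) = 0 :=
      le_antisymm h (mul_nonneg e0 e1)
    rcases mul_eq_zero.1 he with hz | hz
    · exact Or.inl ⟨by nlinarith, h1'⟩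
    · exact Or.inr ⟨by nlinarith, h0'⟩

/-- Lemma 1. If `μ(H1,H2)` is mixed then so is the GSV vector
of the augmented matrices `Gᵢ = [Hᵢ C^{1/2}; I₂]`. -/
theorem mixed_gsv_of_augmented
    {k1 k2 : ℕ} (h1 : 2 ≤ k1) (h2 : 2 ≤ k2)
    (H1 : Matrix (Fin k1) (Fin 2) ℂ) (H2 : Matrix (Fin k2) (Fin 2) ℂ)
    (hH1 : H1.rank = 2) (hH2 : H2.rank = 2)
    (C C12 : Matrix (Fin 2) (Fin 2) ℂ)
    (hC : C.PosSemidef) (hC12 : C12.PosSemidef) (hsq : C12 * C12 = C)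
    (μ : Fin 2 → ℝ) (hμ : NetMod.IsGSV H1 H2 μ) (hmix : NetMod.Mixed μ)
    (ν : Fin 2 → ℝ)
    (hν : NetMod.IsGSV (NetMod.augment (H1 * C12)) (NetMod.augment (H2 * C12)) ν) :
    NetMod.Mixed ν := by
  classical
  set B := C12 with hB
  have hBH : Bᴴ = B := hC12.1
  set M1 : Matrix (Fin 2) (Fin 2) ℂ := H1ᴴ * H1 with hM1
  set M2 : Matrix (Fin 2) (Fin 2) ℂ := H2ᴴ * H2 with hM2
  have hG1 : (NetMod.augment (H1 * B))ᴴ * (NetMod.augment (H1 * B)) = B * M1 * B + 1 := by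
    simp only [NetMod.aug_mul, Matrix.conjTranspose_mul, hBH, hM1, Matrix.mul_assoc]
  have hG2 : (NetMod.augment (H2 * B))ᴴ * (NetMod.augment (H2 * B)) = B * M2 * B + 1 := by
    simp only [NetMod.aug_mul, Matrix.conjTranspose_mul, hBH, hM2, Matrix.mul_assoc]
  have hPSD2 : (B * M2 * B).PosSemidef := by
    have h : B * M2 * B = (H2 * B)ᴴ * (H2 * B) := by
      simp only [Matrix.conjTranspose_mul, hBH, hM2, Matrix.mul_assoc]
    rw [h]
    exact Matrix.posSemidef_conjTranspose_mul_self _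
  have hPD : (B * M2 * B + 1).PosDef :=
    Matrix.PosDef.posSemidef_add hPSD2 Matrix.PosDef.one
  have hPSDM2 : M2.PosSemidef := Matrix.posSemidef_conjTranspose_mul_self _
  set P : ℝ := (μ 0 ^ 2 - 1) * (μ 1 ^ 2 - 1) with hP
  set Q : ℝ := (ν 0 ^ 2 - 1) * (ν 1 ^ 2 - 1) with hQ
  have hμ1 := hμ.2.2 1
  have hν1 := hν.2.2 1
  rw [one_smul] at hμ1 hν1
  have hdiff : (NetMod.augment (H1 * B))ᴴ * (NetMod.augment (H1 * B))
      - (NetMod.augment (H2 * B))ᴴ * (NetMod.augment (H2 * B)) = B * (M1 - M2) * B := by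
    rw [hG1, hG2, Matrix.mul_sub, Matrix.sub_mul]
    abel
  rw [hdiff, hG2] at hν1
  obtain ⟨rB, hrBnn, hdetB⟩ : ∃ r : ℝ, 0 ≤ r ∧ B.det = (r : ℂ) := by
    refine ⟨∏ i, hC12.1.eigenvalues i,
      Finset.prod_nonneg fun i _ => hC12.eigenvalues_nonneg i, ?_⟩
    rw [hC12.1.det_eq_prod_eigenvalues]; push_cast; rfl
  obtain ⟨r2, hr2nn, hdetM2⟩ : ∃ r : ℝ, 0 ≤ r ∧ M2.det = (r : ℂ) := by
    refine ⟨∏ i, hPSDM2.1.eigenvalues i,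
      Finset.prod_nonneg fun i _ => hPSDM2.eigenvalues_nonneg i, ?_⟩
    rw [hPSDM2.1.det_eq_prod_eigenvalues]; push_cast; rfl
  obtain ⟨rG, hrGpos, hdetG2⟩ : ∃ r : ℝ, 0 < r ∧ (B * M2 * B + 1).det = (r : ℂ) := by
    refine ⟨∏ i, hPD.1.eigenvalues i,
      Finset.prod_pos fun i _ => hPD.eigenvalues_pos i, ?_⟩
    rw [hPD.1.det_eq_prod_eigenvalues]; push_cast; rfl
  have hPc : ∏ j, (((μ j : ℂ)) ^ 2 - 1) = (P : ℂ) := by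
    rw [Fin.prod_univ_two, hP]; push_cast; ring
  have hQc : ∏ j, (((ν j : ℂ)) ^ 2 - 1) = (Q : ℂ) := by
    rw [Fin.prod_univ_two, hQ]; push_cast; ring
  have key : ((rB * (r2 * P) * rB : ℝ) : ℂ) = ((rG * Q : ℝ) : ℂ) := by
    push_cast
    rw [← hPc, ← hQc, ← hdetB, ← hdetM2, ← hdetG2, ← hμ1, ← hν1,
      Matrix.det_mul, Matrix.det_mul]
  have keyR : rB * (r2 * P) * rB = rG * Q := by exact_mod_cast key
  have hPle : P ≤ 0 := NetMod.prod_nonpos_of_mixed μ (hμ.2.1 0) (hμ.2.1 1) hmix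
  have hQle : Q ≤ 0 := by
    have hL : rG * Q ≤ 0 := by
      rw [← keyR]
      have h : rB * (r2 * P) * rB = (rB * rB * r2) * P := by ring
      rw [h]
      exact mul_nonpos_iff.2 (Or.inl ⟨by positivity, hPle⟩)
    by_contra hcon
    push_neg at hcon
    exact absurd hL (not_le.2 (mul_pos hrGpos hcon))
  exact NetMod.mixed_of_prod_nonpos ν (hν.2.1 0) (hν.2.1 1) hQle
end

section
/- Let A1 and A2 be complex matrices of proper dimensions, each with two columns, and let μ1 ≥ μ2 be the two generalized singular values of (A1,A2). Then μ2 ≤ 1 ≤ μ1 if and only if det(A1*A1 − A2*A2) ≤ 0 (where this determinant is a real number since A1*A1 − A2*A2 is Hermitian). -/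
open Matrix BigOperators Finset
open scoped ComplexOrder

lemma gram_det_pos' {m2 : ℕ} (A2 : Matrix (Fin m2) (Fin 2) ℂ) (hA2 : A2.rank = 2) :
    ∃ p : ℝ, 0 < p ∧ (A2ᴴ * A2).det = (p : ℂ) := by
  have hps := Matrix.posSemidef_conjTranspose_mul_self A2
  have hH := hps.isHermitian
  have hrank : (A2ᴴ * A2).rank = 2 := by
    rw [Matrix.rank_conjTranspose_mul_self]; exact hA2
  have hunit : IsUnit (A2ᴴ * A2).det := by
    rw [← Matrix.isUnit_iff_isUnit_det, ← Matrix.mulVec_surjective_iff_isUnit]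
    have : LinearMap.range (A2ᴴ * A2).mulVecLin = ⊤ := by
      apply Submodule.eq_top_of_finrank_eq
      simpa [Matrix.rank] using hrank
    intro v
    obtain ⟨w, hw⟩ := (LinearMap.range_eq_top.mp this) v
    exact ⟨w, hw⟩
  refine ⟨∏ i, hH.eigenvalues i, ?_, ?_⟩
  · have hnn : ∀ i, 0 ≤ hH.eigenvalues i := hps.eigenvalues_nonneg
    have hne : (∏ i, hH.eigenvalues i : ℝ) ≠ 0 := by
      intro h
      apply hunit.ne_zero
      rw [hH.det_eq_prod_eigenvalues]
      norm_cast; simp [h]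
    have h2 : (0:ℝ) ≤ ∏ i, hH.eigenvalues i := Finset.prod_nonneg (fun i _ => hnn i)
    exact lt_of_le_of_ne h2 (Ne.symm hne)
  · rw [hH.det_eq_prod_eigenvalues]; norm_cast

/-- For two-column matrices, the GSVs satisfy `μ₂ ≤ 1 ≤ μ₁` iff
`det(A1ᴴA1 − A2ᴴA2) ≤ 0`. -/
theorem mixed_iff_det_nonpos
    {m1 m2 : ℕ} (h1 : 2 ≤ m1) (h2 : 2 ≤ m2)
    (A1 : Matrix (Fin m1) (Fin 2) ℂ) (A2 : Matrix (Fin m2) (Fin 2) ℂ)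
    (hA1 : A1.rank = 2) (hA2 : A2.rank = 2)
    (μ : Fin 2 → ℝ) (hμ : NetMod.IsGSV A1 A2 μ) :
    (μ 1 ≤ 1 ∧ 1 ≤ μ 0) ↔ (A1ᴴ * A1 - A2ᴴ * A2).det.re ≤ 0 := by
  obtain ⟨hmono, hpos, hpoly⟩ := hμ
  obtain ⟨p, hp, hd⟩ := gram_det_pos' A2 hA2
  have hre : (A1ᴴ * A1 - A2ᴴ * A2).det.re = p * ((μ 0 ^ 2 - 1) * (μ 1 ^ 2 - 1)) := by
    rw [show A1ᴴ * A1 - A2ᴴ * A2 = A1ᴴ * A1 - (1:ℂ) • (A2ᴴ * A2) by rw [one_smul],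
      hpoly 1, hd, Fin.prod_univ_two,
      show ((p:ℂ) * (((μ 0 : ℂ) ^ 2 - 1) * ((μ 1 : ℂ) ^ 2 - 1)))
        = ((p * ((μ 0 ^ 2 - 1) * (μ 1 ^ 2 - 1)) : ℝ) : ℂ) by push_cast; ring,
      Complex.ofReal_re]
  rw [hre]
  have hle : μ 1 ≤ μ 0 := hmono (by decide : (0 : Fin 2) ≤ 1)
  have h0 := hpos 0
  have h1' := hpos 1
  constructor
  · rintro ⟨ha, hb⟩
    have f0 : 0 ≤ μ 0 ^ 2 - 1 := by nlinarith
    have f1 : μ 1 ^ 2 - 1 ≤ 0 := by nlinarith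
    exact mul_nonpos_of_nonneg_of_nonpos (le_of_lt hp) (mul_nonpos_of_nonneg_of_nonpos f0 f1)
  · intro h
    have hq : (μ 0 ^ 2 - 1) * (μ 1 ^ 2 - 1) ≤ 0 := by
      by_contra hc
      push_neg at hc
      nlinarith
    constructor
    · by_contra hc; push_neg at hc
      have : 0 < (μ 0 ^ 2 - 1) * (μ 1 ^ 2 - 1) :=
        mul_pos (by nlinarith) (by nlinarith)
      linarith
    · by_contra hc; push_neg at hc
      have : 0 < (μ 0 ^ 2 - 1) * (μ 1 ^ 2 - 1) :=
        mul_pos_of_neg_of_neg (by nlinarith) (by nlinarith)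
      linarith
end

section
/- Call a 2-vector of positive reals mixed if one of its entries is at least 1 and the other is at most 1. Let H1 and H2 be complex matrices of proper dimensions, each with two columns, such that μ(H1,H2) is mixed, let C be a 2×2 Hermitian positive semi-definite matrix with positive semi-definite square root C^{1/2}, and for i = 1, 2 let G_i be the matrix obtained by stacking H_i C^{1/2} on top of the 2×2 identity matrix. Then there exists a joint unitary triangularization G1 = U1 T1 V*, G2 = U2 T2 V* with positive real diagonal entries such that (T1)_{2,2} = (T2)_{2,2}. -/
open Matrix BigOperators Finset
open scoped ComplexOrder

/-!
The QR factor of a two-column matrix `A` with Gram matrix `P = AᴴA` has second diagonal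
entry `√(det P / P₀₀)`, and replacing `A` by `AV` with `V` unitary replaces `P` by `VᴴPV`
without changing `det P`. With `Pᵢ = GᵢᴴGᵢ` it therefore suffices to find a unit vector `v`
with `det P₂ · v*P₁v = det P₁ · v*P₂v`, i.e. an isotropic vector of the Hermitian matrix
`M = det P₂ • P₁ - det P₁ • P₂`. One exists because
`det M = det P₁ det P₂ det (P₁ - P₂)` and
`det (P₁ - P₂) = |det C^{1/2}|² det (H₂ᴴH₂) (μ₁² - 1)(μ₂² - 1) ≤ 0` for mixed `μ`.
-/

theorem Complex.ofReal_sqrt_re_sq {z : ℂ} (hz : 0 ≤ z) : ((√z.re : ℝ) : ℂ) ^ 2 = z := by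
  rw [← Complex.ofReal_pow, Real.sq_sqrt (Complex.nonneg_iff.1 hz).1]
  exact (Complex.eq_re_of_ofReal_le (r := 0) (by simpa using hz)).symm

theorem Complex.ofReal_sqrt_re_pos {z : ℂ} (hz : 0 < z) : 0 < ((√z.re : ℝ) : ℂ) :=
  Complex.zero_lt_real.2 (Real.sqrt_pos.2 (Complex.pos_iff.1 hz).1)

theorem Matrix.det_fin_two_smul_sub_smul {R : Type*} [CommRing R]
    (A B : Matrix (Fin 2) (Fin 2) R) :
    (B.det • A - A.det • B).det = A.det * B.det * (A - B).det := by
  simp only [Matrix.det_fin_two, Matrix.sub_apply, Matrix.smul_apply, smul_eq_mul]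
  ring

namespace NetMod

theorem IsUnitary.mul_conjTranspose {n : ℕ} {V : Matrix (Fin n) (Fin n) ℂ} (hV : IsUnitary V) :
    V * Vᴴ = 1 :=
  mul_eq_one_comm.mp hV

theorem IsUnitary.det_conjTranspose_mul_mul {n : ℕ} {V : Matrix (Fin n) (Fin n) ℂ}
    (hV : IsUnitary V) (P : Matrix (Fin n) (Fin n) ℂ) : (Vᴴ * P * V).det = P.det := by
  rw [Matrix.det_mul, Matrix.det_mul, mul_comm _ P.det, mul_assoc, ← Matrix.det_mul, hV,
    Matrix.det_one, mul_one]

theorem IsUnitary.posDef_conjTranspose_mul_mul {n : ℕ} {V P : Matrix (Fin n) (Fin n) ℂ}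
    (hV : IsUnitary V) (hP : P.PosDef) : (Vᴴ * P * V).PosDef :=
  hP.conjTranspose_mul_mul_same <| Matrix.mulVec_injective_iff_isUnit.2 <|
    ⟨⟨V, Vᴴ, hV.mul_conjTranspose, hV⟩, rfl⟩

theorem exists_isUnitary_extension {m n : ℕ} (h : n ≤ m) (Q : Matrix (Fin m) (Fin n) ℂ)
    (hQ : Qᴴ * Q = 1) :
    ∃ U : Matrix (Fin m) (Fin m) ℂ, IsUnitary U ∧ ∀ i j, U i (Fin.castLE h j) = Q i j := by
  let v : Fin m → EuclideanSpace ℂ (Fin m) := fun l =>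
    if hl : (l : ℕ) < n then WithLp.toLp 2 (Qᵀ ⟨l, hl⟩) else 0
  have hv : ∀ j, v (Fin.castLE h j) = WithLp.toLp 2 (Qᵀ j) := fun j => by simp [v]
  have hQcols : ∀ j j', inner ℂ (WithLp.toLp 2 (Qᵀ j) : EuclideanSpace ℂ (Fin m))
      (WithLp.toLp 2 (Qᵀ j')) = (1 : Matrix (Fin n) (Fin n) ℂ) j j' := fun j j' => by
    rw [← hQ]
    simp [EuclideanSpace.inner_toLp_toLp, Matrix.mul_apply, dotProduct, mul_comm]
  have hon : Orthonormal ℂ ((Set.range (Fin.castLE h)).domRestrict v) := by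
    rw [orthonormal_iff_ite]
    rintro ⟨_, j, rfl⟩ ⟨_, j', rfl⟩
    simp only [Set.domRestrict_apply, hv, hQcols, Matrix.one_apply]
    exact if_congr (by simp [Subtype.ext_iff]) rfl rfl
  obtain ⟨b, hb⟩ := hon.exists_orthonormalBasis_extension_of_card_eq (by simp)
  refine ⟨(EuclideanSpace.basisFun (Fin m) ℂ).toBasis.toMatrix b,
    (EuclideanSpace.basisFun _ _).toMatrix_orthonormalBasis_conjTranspose_mul_self b,
    fun i j => ?_⟩
  rw [Module.Basis.toMatrix_apply, hb _ ⟨j, rfl⟩, hv]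
  rfl

def padBelow {m n : ℕ} (R : Matrix (Fin n) (Fin n) ℂ) : Matrix (Fin m) (Fin n) ℂ :=
  Matrix.of fun i j => if hi : (i : ℕ) < n then R ⟨i, hi⟩ j else 0

@[simp]
theorem padBelow_castLE {m n : ℕ} (h : n ≤ m) (R : Matrix (Fin n) (Fin n) ℂ) (i j : Fin n) :
    padBelow R (Fin.castLE h i) j = R i j := by
  simp [padBelow]

theorem genUpperTri_padBelow {m n : ℕ} {R : Matrix (Fin n) (Fin n) ℂ}
    (hR : R.BlockTriangular id) : GenUpperTri (padBelow R : Matrix (Fin m) (Fin n) ℂ) := by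
  intro i j hij
  simp only [padBelow, Matrix.of_apply]
  split_ifs with hi
  · exact hR (show j < ⟨i, hi⟩ from hij)
  · rfl

theorem posRealDiag_padBelow {m n : ℕ} (h : n ≤ m) {R : Matrix (Fin n) (Fin n) ℂ}
    (hR : ∀ j, 0 < R j j) : PosRealDiag h (padBelow R) := fun j => by
  rw [padBelow_castLE]
  exact ⟨(Complex.pos_iff.1 (hR j)).1, (Complex.pos_iff.1 (hR j)).2.symm⟩

theorem exists_isUnitary_eq_mul_padBelow {m n : ℕ} (h : n ≤ m) {A : Matrix (Fin m) (Fin n) ℂ}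
    {R : Matrix (Fin n) (Fin n) ℂ} (hR : IsUnit R) (hAR : Aᴴ * A = Rᴴ * R) :
    ∃ U : Matrix (Fin m) (Fin m) ℂ, IsUnitary U ∧ A = U * padBelow R := by
  have hdet := (R.isUnit_iff_isUnit_det).mp hR
  obtain ⟨U, hU, hUQ⟩ := exists_isUnitary_extension h (A * R⁻¹) (by
    rw [Matrix.conjTranspose_mul, Matrix.mul_assoc, ← Matrix.mul_assoc Aᴴ, hAR,
      ← Matrix.mul_assoc, ← Matrix.mul_assoc, ← Matrix.conjTranspose_mul, Matrix.mul_assoc,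
      R.mul_nonsing_inv hdet, Matrix.conjTranspose_one, Matrix.one_mul])
  refine ⟨U, hU, ?_⟩
  ext i j
  calc A i j = (A * R⁻¹ * R) i j := by
        rw [Matrix.mul_assoc, R.nonsing_inv_mul hdet, Matrix.mul_one]
    _ = ∑ l, (A * R⁻¹) i l * R l j := Matrix.mul_apply
    _ = ∑ l, U i l * padBelow R l j := by
      refine Fintype.sum_of_injective _ (Fin.castLE_injective h) _ _ (fun l hl => ?_)
        (fun l => by rw [hUQ, padBelow_castLE])
      have hln : ¬ (l : ℕ) < n := fun hl' => hl ⟨⟨l, hl'⟩, rfl⟩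
      simp [padBelow, hln]
    _ = (U * padBelow R : Matrix (Fin m) (Fin n) ℂ) i j := Matrix.mul_apply.symm

noncomputable def choleskyFinTwo (P : Matrix (Fin 2) (Fin 2) ℂ) : Matrix (Fin 2) (Fin 2) ℂ :=
  !![((√(P 0 0).re : ℝ) : ℂ), P 0 1 / ((√(P 0 0).re : ℝ) : ℂ);
    0, ((√(P.det / P 0 0).re : ℝ) : ℂ)]

theorem blockTriangular_choleskyFinTwo (P : Matrix (Fin 2) (Fin 2) ℂ) :
    (choleskyFinTwo P).BlockTriangular id := by
  intro i j hij
  fin_cases i <;> fin_cases j <;> simp_all [choleskyFinTwo]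

theorem choleskyFinTwo_diag_pos {P : Matrix (Fin 2) (Fin 2) ℂ} (hP : P.PosDef) (j : Fin 2) :
    0 < choleskyFinTwo P j j := by
  fin_cases j
  · exact Complex.ofReal_sqrt_re_pos hP.diag_pos
  · exact Complex.ofReal_sqrt_re_pos (div_pos hP.det_pos hP.diag_pos)

theorem conjTranspose_choleskyFinTwo_mul_self {P : Matrix (Fin 2) (Fin 2) ℂ} (hP : P.PosDef) :
    (choleskyFinTwo P)ᴴ * choleskyFinTwo P = P := by
  have ha : ((√(P 0 0).re : ℝ) : ℂ) ^ 2 = P 0 0 := Complex.ofReal_sqrt_re_sq hP.diag_pos.le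
  have hd : ((√(P.det / P 0 0).re : ℝ) : ℂ) ^ 2 = P.det / P 0 0 :=
    Complex.ofReal_sqrt_re_sq (div_pos hP.det_pos hP.diag_pos).le
  have ha0 : ((√(P 0 0).re : ℝ) : ℂ) ≠ 0 := (Complex.ofReal_sqrt_re_pos hP.diag_pos).ne'
  have hP10 : P 1 0 = star (P 0 1) := (hP.isHermitian.apply 1 0).symm
  ext i j
  fin_cases i <;> fin_cases j <;>
    simp [choleskyFinTwo, Matrix.mul_apply, Fin.sum_univ_two, hP10, ← pow_two, ha, ha0]
  · field_simp
  · have hP00 : P 0 0 ≠ 0 := hP.diag_pos.ne'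
    rw [hd, Matrix.det_fin_two, hP10, RCLike.star_def]
    field_simp
    rw [ha]
    ring

theorem exists_qr_fin_two {m : ℕ} (h : 2 ≤ m) (A : Matrix (Fin m) (Fin 2) ℂ)
    (hA : (Aᴴ * A).PosDef) :
    ∃ (U : Matrix (Fin m) (Fin m) ℂ) (T : Matrix (Fin m) (Fin 2) ℂ),
      IsUnitary U ∧ GenUpperTri T ∧ A = U * T ∧ PosRealDiag h T ∧
      T (Fin.castLE h 1) 1 = ((√((Aᴴ * A).det / (Aᴴ * A) 0 0).re : ℝ) : ℂ) := by
  have hR := conjTranspose_choleskyFinTwo_mul_self hA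
  have hRdet : (choleskyFinTwo (Aᴴ * A)).det ≠ 0 := fun h0 => hA.det_pos.ne' <| by
    rw [← hR, Matrix.det_mul, h0, mul_zero]
  obtain ⟨U, hU, hAU⟩ := exists_isUnitary_eq_mul_padBelow h
    ((Matrix.isUnit_iff_isUnit_det _).2 hRdet.isUnit) hR.symm
  exact ⟨U, _, hU, genUpperTri_padBelow (blockTriangular_choleskyFinTwo _), hAU,
    posRealDiag_padBelow h (choleskyFinTwo_diag_pos hA), by simp [choleskyFinTwo]⟩

theorem exists_ne_zero_star_dotProduct_mulVec_eq_zero {M : Matrix (Fin 2) (Fin 2) ℂ}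
    (hM : M.IsHermitian) (hdet : M.det ≤ 0) : ∃ v ≠ 0, star v ⬝ᵥ (M *ᵥ v) = 0 := by
  have hM10 : M 1 0 = star (M 0 1) := (hM.apply 1 0).symm
  have hM00 : star (M 0 0) = M 0 0 := hM.apply 0 0
  by_cases hα : M 0 0 = 0
  · refine ⟨Pi.single 0 1, Pi.single_ne_zero_iff.2 one_ne_zero, ?_⟩
    simp [hα]
  · -- completing the square: `M₀₀ · v*Mv = |M₀₀ v₀ + M₀₁ v₁|² + det M · |v₁|²`
    set s : ℂ := ((√(-M.det).re : ℝ) : ℂ)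
    have hs : s ^ 2 = -M.det := Complex.ofReal_sqrt_re_sq (neg_nonneg.2 hdet)
    have hs' : star s = s := Complex.conj_ofReal _
    refine ⟨![s - M 0 1, M 0 0], fun h0 => hα (by simpa using congrFun h0 1), ?_⟩
    simp only [dotProduct, Fin.sum_univ_two, Matrix.mulVec, Pi.star_apply, star_sub,
      Matrix.cons_val_zero, Matrix.cons_val_one, hs', hM00, hM10]
    rw [Matrix.det_fin_two, hM10] at hs
    linear_combination M 0 0 * hs

theorem exists_isUnitary_conjTranspose_mul_mul_apply_zero_zero {M : Matrix (Fin 2) (Fin 2) ℂ}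
    {v : Fin 2 → ℂ} (hv : v ≠ 0) (hMv : star v ⬝ᵥ (M *ᵥ v) = 0) :
    ∃ V : Matrix (Fin 2) (Fin 2) ℂ, IsUnitary V ∧ (Vᴴ * M * V) 0 0 = 0 := by
  set r : ℂ := ((√(star v ⬝ᵥ v).re : ℝ) : ℂ)
  have hpos : 0 < star v ⬝ᵥ v := dotProduct_star_self_pos_iff.2 hv
  have hr : r ^ 2 = star v ⬝ᵥ v := Complex.ofReal_sqrt_re_sq hpos.le
  have hr0 : r ≠ 0 := (Complex.ofReal_sqrt_re_pos hpos).ne'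
  have hr' : starRingEnd ℂ r = r := Complex.conj_ofReal _
  simp only [dotProduct, Fin.sum_univ_two, Pi.star_apply, RCLike.star_def] at hr
  simp only [dotProduct, Fin.sum_univ_two, Matrix.mulVec, Pi.star_apply, RCLike.star_def] at hMv
  refine ⟨!![v 0 / r, -star (v 1 / r); v 1 / r, star (v 0 / r)], ?_, ?_⟩
  · ext i j
    fin_cases i <;> fin_cases j <;> simp [Matrix.mul_apply, Fin.sum_univ_two, hr'] <;>
      field_simp <;> rw [hr] <;> ring
  · simp only [star_div₀, RCLike.star_def, hr', Matrix.mul_apply, Matrix.conjTranspose_apply,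
      Matrix.of_apply, Matrix.cons_val', Matrix.cons_val_zero, Matrix.cons_val_fin_one,
      Matrix.cons_val_one, Fin.sum_univ_two, map_div₀]
    field_simp
    linear_combination hMv

theorem exists_isUnitary_det_div_apply_zero_zero_eq {P₁ P₂ : Matrix (Fin 2) (Fin 2) ℂ}
    (h₁ : P₁.PosDef) (h₂ : P₂.PosDef) (hdet : (P₁ - P₂).det ≤ 0) :
    ∃ V : Matrix (Fin 2) (Fin 2) ℂ, IsUnitary V ∧ (Vᴴ * P₁ * V).det / (Vᴴ * P₁ * V) 0 0 =
      (Vᴴ * P₂ * V).det / (Vᴴ * P₂ * V) 0 0 := by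
  set M := P₂.det • P₁ - P₁.det • P₂
  have hM : M.IsHermitian := by
    simp only [M, Matrix.IsHermitian, Matrix.conjTranspose_sub, Matrix.conjTranspose_smul,
      (IsSelfAdjoint.of_nonneg h₁.det_pos.le).star_eq,
      (IsSelfAdjoint.of_nonneg h₂.det_pos.le).star_eq, h₁.isHermitian.eq, h₂.isHermitian.eq]
  have hMdet : M.det ≤ 0 := by
    rw [Matrix.det_fin_two_smul_sub_smul]
    exact mul_nonpos_of_nonneg_of_nonpos (mul_pos h₁.det_pos h₂.det_pos).le hdet
  obtain ⟨v, hv, hMv⟩ := exists_ne_zero_star_dotProduct_mulVec_eq_zero hM hMdet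
  obtain ⟨V, hV, hMV⟩ := exists_isUnitary_conjTranspose_mul_mul_apply_zero_zero hv hMv
  refine ⟨V, hV, ?_⟩
  rw [hV.det_conjTranspose_mul_mul, hV.det_conjTranspose_mul_mul,
    div_eq_div_iff (hV.posDef_conjTranspose_mul_mul h₁).diag_pos.ne'
      (hV.posDef_conjTranspose_mul_mul h₂).diag_pos.ne']
  simp only [M, Matrix.mul_sub, Matrix.sub_mul, Matrix.mul_smul, Matrix.smul_mul,
    Matrix.sub_apply, Matrix.smul_apply, smul_eq_mul] at hMV
  linear_combination -hMV

theorem augment_eq_submatrix_fromRows {m n : ℕ} (F : Matrix (Fin m) (Fin n) ℂ) :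
    augment F = (Matrix.fromRows F 1).submatrix finSumFinEquiv.symm id := by
  ext i j
  refine Fin.addCases (fun i => ?_) (fun i => ?_) i <;>
    simp [augment, Matrix.one_apply, Fin.ext_iff]

theorem conjTranspose_augment_mul_self {m n : ℕ} (F : Matrix (Fin m) (Fin n) ℂ) :
    (augment F)ᴴ * augment F = Fᴴ * F + 1 := by
  rw [augment_eq_submatrix_fromRows, Matrix.conjTranspose_submatrix,
    Matrix.submatrix_mul_equiv _ _ _ finSumFinEquiv.symm,
    Matrix.conjTranspose_fromRows_eq_fromCols_conjTranspose, Matrix.fromCols_mul_fromRows,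
    Matrix.conjTranspose_one, Matrix.one_mul, Matrix.submatrix_id_id]

theorem posDef_conjTranspose_augment_mul_self {m n : ℕ} (F : Matrix (Fin m) (Fin n) ℂ) :
    ((augment F)ᴴ * augment F).PosDef := by
  rw [conjTranspose_augment_mul_self]
  exact Matrix.PosDef.posSemidef_add (Matrix.posSemidef_conjTranspose_mul_self F)
    Matrix.PosDef.one

theorem det_sub_conjTranspose_augment_mul_mul_self_nonpos {m₁ m₂ n : ℕ}
    {H₁ : Matrix (Fin m₁) (Fin n) ℂ} {H₂ : Matrix (Fin m₂) (Fin n) ℂ}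
    (h : (H₁ᴴ * H₁ - H₂ᴴ * H₂).det ≤ 0) (C : Matrix (Fin n) (Fin n) ℂ) :
    ((augment (H₁ * C))ᴴ * augment (H₁ * C) -
      (augment (H₂ * C))ᴴ * augment (H₂ * C)).det ≤ 0 := by
  have hC : (H₁ * C)ᴴ * (H₁ * C) - (H₂ * C)ᴴ * (H₂ * C) =
      Cᴴ * (H₁ᴴ * H₁ - H₂ᴴ * H₂) * C := by
    simp only [Matrix.conjTranspose_mul, Matrix.mul_sub, Matrix.sub_mul, Matrix.mul_assoc]
  rw [conjTranspose_augment_mul_self, conjTranspose_augment_mul_self, add_sub_add_right_eq_sub,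
    hC, Matrix.det_mul, Matrix.det_mul, Matrix.det_conjTranspose, mul_right_comm]
  exact mul_nonpos_of_nonneg_of_nonpos (star_mul_self_nonneg _) h

theorem Mixed.sq_sub_one_mul_sq_sub_one_nonpos {μ : Fin 2 → ℝ} (hmix : Mixed μ)
    (hμ : ∀ j, 0 < μ j) : (μ 0 ^ 2 - 1) * (μ 1 ^ 2 - 1) ≤ 0 := by
  have h₀ := hμ 0
  have h₁ := hμ 1
  rcases hmix with ⟨h₀₁, h₁₁⟩ | ⟨h₁₁, h₀₁⟩
  · exact mul_nonpos_of_nonpos_of_nonneg (by nlinarith) (by nlinarith)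
  · exact mul_nonpos_of_nonneg_of_nonpos (by nlinarith) (by nlinarith)

theorem IsGSV.det_sub_nonpos_of_mixed {m₁ m₂ : ℕ} {A₁ : Matrix (Fin m₁) (Fin 2) ℂ}
    {A₂ : Matrix (Fin m₂) (Fin 2) ℂ} {μ : Fin 2 → ℝ} (hμ : IsGSV A₁ A₂ μ)
    (hmix : Mixed μ) : (A₁ᴴ * A₁ - A₂ᴴ * A₂).det ≤ 0 := by
  have h := hμ.2.2 1
  rw [one_smul] at h
  rw [h, Fin.prod_univ_two]
  refine mul_nonpos_of_nonneg_of_nonpos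
    (Matrix.posSemidef_conjTranspose_mul_self A₂).det_nonneg ?_
  exact_mod_cast hmix.sq_sub_one_mul_sq_sub_one_nonpos hμ.2.1

end NetMod

theorem augmented_joint_triangularization_equal_second_diag_general
    {k1 k2 : ℕ}
    (H1 : Matrix (Fin k1) (Fin 2) ℂ) (H2 : Matrix (Fin k2) (Fin 2) ℂ)
    (C12 : Matrix (Fin 2) (Fin 2) ℂ)
    (μ : Fin 2 → ℝ) (hμ : NetMod.IsGSV H1 H2 μ) (hmix : NetMod.Mixed μ) :
    ∃ (U1 : Matrix (Fin (k1 + 2)) (Fin (k1 + 2)) ℂ)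
      (U2 : Matrix (Fin (k2 + 2)) (Fin (k2 + 2)) ℂ)
      (V : Matrix (Fin 2) (Fin 2) ℂ)
      (T1 : Matrix (Fin (k1 + 2)) (Fin 2) ℂ) (T2 : Matrix (Fin (k2 + 2)) (Fin 2) ℂ),
      NetMod.JointTriang (NetMod.augment (H1 * C12)) (NetMod.augment (H2 * C12))
        U1 U2 V T1 T2 ∧
      NetMod.PosRealDiag (Nat.le_add_left 2 k1) T1 ∧
      NetMod.PosRealDiag (Nat.le_add_left 2 k2) T2 ∧
      T1 (Fin.castLE (Nat.le_add_left 2 k1) 1) 1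
        = T2 (Fin.castLE (Nat.le_add_left 2 k2) 1) 1 := by
  set G1 := NetMod.augment (H1 * C12)
  set G2 := NetMod.augment (H2 * C12)
  have hP1 := NetMod.posDef_conjTranspose_augment_mul_self (H1 * C12)
  have hP2 := NetMod.posDef_conjTranspose_augment_mul_self (H2 * C12)
  obtain ⟨V, hV, hVeq⟩ := NetMod.exists_isUnitary_det_div_apply_zero_zero_eq hP1 hP2
    (NetMod.det_sub_conjTranspose_augment_mul_mul_self_nonpos
      (hμ.det_sub_nonpos_of_mixed hmix) C12)
  have hgram : ∀ {m : ℕ} (G : Matrix (Fin m) (Fin 2) ℂ),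
      (G * V)ᴴ * (G * V) = Vᴴ * (Gᴴ * G) * V := fun G => by
    simp only [Matrix.conjTranspose_mul, Matrix.mul_assoc]
  obtain ⟨U1, T1, hU1, hT1, hGU1, hdiag1, hT1e⟩ := NetMod.exists_qr_fin_two
    (Nat.le_add_left 2 k1) (G1 * V) (hgram G1 ▸ hV.posDef_conjTranspose_mul_mul hP1)
  obtain ⟨U2, T2, hU2, hT2, hGU2, hdiag2, hT2e⟩ := NetMod.exists_qr_fin_two
    (Nat.le_add_left 2 k2) (G2 * V) (hgram G2 ▸ hV.posDef_conjTranspose_mul_mul hP2)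
  refine ⟨U1, U2, V, T1, T2, ⟨hU1, hU2, hV, hT1, hT2, ?_, ?_⟩, hdiag1, hdiag2, ?_⟩
  · rw [← hGU1, Matrix.mul_assoc, hV.mul_conjTranspose, Matrix.mul_one]
  · rw [← hGU2, Matrix.mul_assoc, hV.mul_conjTranspose, Matrix.mul_one]
  · rw [hT1e, hT2e, hgram, hgram, hVeq]

/-- If `μ(H1,H2)` is mixed then the augmented matrices
`Gᵢ = [Hᵢ C^{1/2}; I₂]` admit a joint unitary triangularization with equal second
diagonal entries. -/
theorem augmented_joint_triangularization_equal_second_diag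
    {k1 k2 : ℕ} (h1 : 2 ≤ k1) (h2 : 2 ≤ k2)
    (H1 : Matrix (Fin k1) (Fin 2) ℂ) (H2 : Matrix (Fin k2) (Fin 2) ℂ)
    (hH1 : H1.rank = 2) (hH2 : H2.rank = 2)
    (C C12 : Matrix (Fin 2) (Fin 2) ℂ)
    (hC : C.PosSemidef) (hC12 : C12.PosSemidef) (hsq : C12 * C12 = C)
    (μ : Fin 2 → ℝ) (hμ : NetMod.IsGSV H1 H2 μ) (hmix : NetMod.Mixed μ) :
    ∃ (U1 : Matrix (Fin (k1 + 2)) (Fin (k1 + 2)) ℂ)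
      (U2 : Matrix (Fin (k2 + 2)) (Fin (k2 + 2)) ℂ)
      (V : Matrix (Fin 2) (Fin 2) ℂ)
      (T1 : Matrix (Fin (k1 + 2)) (Fin 2) ℂ) (T2 : Matrix (Fin (k2 + 2)) (Fin 2) ℂ),
      NetMod.JointTriang (NetMod.augment (H1 * C12)) (NetMod.augment (H2 * C12))
        U1 U2 V T1 T2 ∧
      NetMod.PosRealDiag (Nat.le_add_left 2 k1) T1 ∧
      NetMod.PosRealDiag (Nat.le_add_left 2 k2) T2 ∧
      T1 (Fin.castLE (Nat.le_add_left 2 k1) 1) 1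
        = T2 (Fin.castLE (Nat.le_add_left 2 k2) 1) 1 :=
  augmented_joint_triangularization_equal_second_diag_general H1 H2 C12 μ hμ hmix
end
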